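/- (Weight ratio identity for the path modification) Fix sequences λ with λ_i > 0 and ρ with ρ_i ≥ 0, and integers k ≥ 2 and 2 ≤ ℓ ≤ k. For γ ∈ Γ_ℓ^{(k)}, let γ̃ ∈ Γ_2^{(k)} be the path obtained from γ by inserting ℓ−2 consecutive down-steps immediately before the final up-step of γ. Then q(γ) · λ_1 · ∏_{n=3}^{ℓ} (1 + D_n) = q(γ̃) · λ_{ℓ−1} · ∏_{h=1}^{ℓ−2} (1 + λ_h + D_h). Equivalently, q(γ) = q(γ̃) · (λ_{ℓ−1}/λ_1) · (1+λ_1+D_1)(1+λ_2+D_2) / ((1+D_{ℓ−1})(1+D_ℓ)) · ∏_{i=3}^{ℓ−2} (1 + λ_i/(1+D_i)). -/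

import Mathlib

open Filter Finset

/-- Final height of a `±1` path started at height `j`; `true` is a rise step,
`false` is a fall step. -/
def endH : ℕ → List Bool → ℕ
  | j, [] => j
  | j, true :: s => endH (j + 1) s
  | j, false :: s => endH (j - 1) s

/-- `isDyck j s` holds when the path `s` started at height `j` never goes below height 0
(every fall step occurs from height ≥ 1). -/
def isDyck : ℕ → List Bool → Bool
  | _, [] => true
  | j, true :: s => isDyck (j + 1) s
  | j, false :: s => decide (1 ≤ j) && isDyck (j - 1) s

/-- `isJump j s` holds when the path `s` started at height `j` stays at height ≥ 1
(every fall step occurs from height ≥ 2). -/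
def isJump : ℕ → List Bool → Bool
  | _, [] => true
  | j, true :: s => isJump (j + 1) s
  | j, false :: s => decide (2 ≤ j) && isJump (j - 1) s

/-- Weight of a lattice path: a rise step from height `j` has weight `u j`, a fall step
from height `j+1` to `j` has weight `v j`. -/
noncomputable def dwt (u v : ℕ → ℝ) : ℕ → List Bool → ℝ
  | _, [] => 1
  | j, true :: s => u j * dwt u v (j + 1) s
  | j, false :: s => v (j - 1) * dwt u v (j - 1) s

/-- Weight `p(γ)` of a jump-chain path: an up-step from height `j` has weight
`λ_j/(1+λ_j+D_j)`, a down-step from height `j` has weight `1/(1+λ_j+D_j)`. -/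
noncomputable def jwt (lam Dd : ℕ → ℝ) : ℕ → List Bool → ℝ
  | _, [] => 1
  | j, true :: s => lam j / (1 + lam j + Dd j) * jwt lam Dd (j + 1) s
  | j, false :: s => 1 / (1 + lam j + Dd j) * jwt lam Dd (j - 1) s

/-- `D_j = Σ_{i=1}^j ρ_i`. -/
noncomputable def Dd (rho : ℕ → ℝ) (j : ℕ) : ℝ := ∑ i ∈ Finset.Icc 1 j, rho i

/-- `u(j) = λ_{j+1}/(1+λ_{j+1}+D_{j+1})`. -/
noncomputable def uWt (lam rho : ℕ → ℝ) (j : ℕ) : ℝ :=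
  lam (j + 1) / (1 + lam (j + 1) + Dd rho (j + 1))

/-- `v(j) = 1/(1+λ_{j+2}+D_{j+2})`. -/
noncomputable def vWt (lam rho : ℕ → ℝ) (j : ℕ) : ℝ :=
  1 / (1 + lam (j + 2) + Dd rho (j + 2))

/-- The weighted Catalan number `C_k`: the sum of `ω(γ)` over all Dyck paths `γ` of
length `2k` (paths of `k` rise and `k` fall steps from height 0 staying at height ≥ 0). -/
noncomputable def Ck (lam rho : ℕ → ℝ) (k : ℕ) : ℝ :=
  ∑ γ : Fin (2 * k) → Bool,
    if isDyck 0 (List.ofFn γ) = true ∧ endH 0 (List.ofFn γ) = 0 then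
      dwt (uWt lam rho) (vWt lam rho) 0 (List.ofFn γ)
    else 0

/-- The power series `Σ_k C_k z^k` as a formal multilinear series over `ℂ`. -/
noncomputable def gSeries (lam rho : ℕ → ℝ) : FormalMultilinearSeries ℂ ℂ ℂ :=
  fun n => FormalMultilinearSeries.ofScalars ℂ (fun k => (Ck lam rho k : ℂ)) n

/-- `M`, the radius of convergence of `g(z) = Σ_k C_k z^k`. -/
noncomputable def radiusM (lam rho : ℕ → ℝ) : ENNReal := (gSeries lam rho).radius

/-- `σ(ℓ) = ∏_{n=1}^ℓ 1/(1+D_n)`. -/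
noncomputable def sigmaWt (rho : ℕ → ℝ) (l : ℕ) : ℝ :=
  ∏ n ∈ Finset.Icc 1 l, 1 / (1 + Dd rho n)

/-- `q_ℓ^{(k)} = Σ_{γ ∈ Γ_ℓ^{(k)}} p(γ) σ(ℓ)`, where `Γ_ℓ^{(k)}` is the set of jump-chain
paths of length `2k − ℓ − 1` that start at height 1, stay at height ≥ 1, and whose final
step is an up-step ending at height `ℓ`. -/
noncomputable def qsum (lam rho : ℕ → ℝ) (k l : ℕ) : ℝ :=
  (∑ γ : Fin (2 * k - l - 1) → Bool,
    if isJump 1 (List.ofFn γ) = true ∧ endH 1 (List.ofFn γ) = l ∧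
        (List.ofFn γ).getLast? = some true then
      jwt lam (Dd rho) 1 (List.ofFn γ)
    else 0) * sigmaWt rho l

/-- `Γ_ℓ^{(k)}`, as a set of step lists. -/
def Gamma (k l : ℕ) : Set (List Bool) :=
  {s | s.length = 2 * k - l - 1 ∧ isJump 1 s = true ∧ endH 1 s = l ∧
    s.getLast? = some true}

/-- The path modification `γ ↦ γ̃`: insert `ℓ − 2` consecutive down-steps immediately
before the final (upward) step. -/
def tilde (l : ℕ) (s : List Bool) : List Bool :=
  s.dropLast ++ List.replicate (l - 2) false ++ [true]

/-!
Write `γ = s ++ [true]` with `s` ending at height `ℓ - 1`, and put `E_j = 1 + λ_j + D_j`.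
Then `p(γ) = p(s) · λ_{ℓ-1} / E_{ℓ-1}`, while `γ̃` walks from `ℓ - 1` straight down to `1`
before its last up-step, so `p(γ̃) = p(s) · λ_1 / (E_1 ⋯ E_{ℓ-1})`. Since
`σ(ℓ) ∏_{n=3}^{ℓ} (1 + D_n) = σ(2)` and `E_1 ∏_{h=2}^{ℓ-1} E_h = E_{ℓ-1} ∏_{h=1}^{ℓ-2} E_h`,
both sides equal `p(s) σ(2) λ_1 λ_{ℓ-1} / E_{ℓ-1}`.
-/

lemma endH_append (s t : List Bool) (j : ℕ) : endH j (s ++ t) = endH (endH j s) t := by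
  induction s generalizing j with
  | nil => rfl
  | cons b s ih => cases b <;> simp [endH, ih]

lemma jwt_append (lam D : ℕ → ℝ) (s t : List Bool) (j : ℕ) :
    jwt lam D j (s ++ t) = jwt lam D j s * jwt lam D (endH j s) t := by
  induction s generalizing j with
  | nil => simp [jwt, endH]
  | cons b s ih => cases b <;> simp [jwt, endH, ih, mul_assoc]

lemma endH_replicate_false (m c : ℕ) : endH (m + c) (List.replicate m false) = c := by
  induction m with
  | zero => simp [endH]
  | succ m ih => simpa [List.replicate_succ, endH, Nat.add_right_comm m 1 c] using ih

lemma jwt_replicate_false (lam D : ℕ → ℝ) (m c : ℕ) :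
    jwt lam D (m + c) (List.replicate m false) =
      (∏ i ∈ Icc (c + 1) (m + c), (1 + lam i + D i))⁻¹ := by
  induction m with
  | zero => simp [jwt]
  | succ m ih =>
    rw [Nat.add_right_comm m 1 c, prod_Icc_succ_top (by omega)]
    simp only [List.replicate_succ, jwt, Nat.add_sub_cancel, ih]
    rw [mul_inv, one_div, mul_comm]

lemma jwt_concat_true (lam D : ℕ → ℝ) (s : List Bool) (j : ℕ) :
    jwt lam D j (s ++ [true]) =
      jwt lam D j s * (lam (endH j s) / (1 + lam (endH j s) + D (endH j s))) := by
  simp [jwt_append, jwt]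

lemma jwt_tilde (lam D : ℕ → ℝ) (s : List Bool) (n : ℕ) (hs : endH 1 s = n + 1) :
    jwt lam D 1 (tilde (n + 2) (s ++ [true])) =
      jwt lam D 1 s * (∏ i ∈ Icc 2 (n + 1), (1 + lam i + D i))⁻¹ *
        (lam 1 / (1 + lam 1 + D 1)) := by
  rw [tilde, List.dropLast_concat, Nat.add_sub_cancel, List.append_assoc, jwt_append,
    jwt_append, hs, jwt_replicate_false, endH_replicate_false]
  simp [jwt, mul_assoc]

lemma prod_Icc_one_mul_eq_mul_prod_Icc_two {M : Type*} [CommMonoid M] (f : ℕ → M) (n : ℕ) :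
    (∏ i ∈ Icc 1 n, f i) * f (n + 1) = f 1 * ∏ i ∈ Icc 2 (n + 1), f i := by
  induction n with
  | zero => simp
  | succ n ih => rw [prod_Icc_succ_top (by omega), prod_Icc_succ_top (by omega), ih, mul_assoc]

lemma prod_Icc_one_div_div_prod_Icc_two {K : Type*} [Field K] {f : ℕ → K}
    (hf : ∀ i, 1 ≤ i → f i ≠ 0) (n : ℕ) :
    (∏ i ∈ Icc 1 n, f i) / f 1 / ∏ i ∈ Icc 2 (n + 1), f i = (f (n + 1))⁻¹ := by
  rw [div_div, ← prod_Icc_one_mul_eq_mul_prod_Icc_two]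
  exact div_mul_cancel_left₀ (prod_ne_zero_iff.mpr fun i hi => hf i (mem_Icc.mp hi).1) _

lemma Dd_nonneg {rho : ℕ → ℝ} (hrho : ∀ i, 1 ≤ i → 0 ≤ rho i) (j : ℕ) : 0 ≤ Dd rho j :=
  sum_nonneg fun i hi => hrho i (mem_Icc.mp hi).1

lemma one_add_add_Dd_ne_zero {lam rho : ℕ → ℝ} (hlam : ∀ i, 1 ≤ i → 0 < lam i)
    (hrho : ∀ i, 1 ≤ i → 0 ≤ rho i) {j : ℕ} (hj : 1 ≤ j) : 1 + lam j + Dd rho j ≠ 0 := by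
  have := hlam j hj
  have := Dd_nonneg hrho j
  positivity

lemma sigmaWt_mul_prod_Icc {rho : ℕ → ℝ} (hrho : ∀ i, 1 ≤ i → 0 ≤ rho i) {m l : ℕ}
    (hml : m ≤ l) : sigmaWt rho l * ∏ n ∈ Icc (m + 1) l, (1 + Dd rho n) = sigmaWt rho m := by
  induction l, hml using Nat.le_induction with
  | base => simp
  | succ l hml ih =>
    have hD : 1 + Dd rho (l + 1) ≠ 0 := by have := Dd_nonneg hrho (l + 1); positivity
    rw [sigmaWt, prod_Icc_succ_top (by omega), prod_Icc_succ_top (by omega), ← ih, sigmaWt]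
    field_simp

theorem weight_ratio_identity_general (lam rho : ℕ → ℝ)
    (hlam : ∀ i, 1 ≤ i → 0 < lam i) (hrho : ∀ i, 1 ≤ i → 0 ≤ rho i)
    (k l : ℕ) (hl : 2 ≤ l)
    (γ : List Bool) (hγ : γ ∈ Gamma k l) :
    jwt lam (Dd rho) 1 γ * sigmaWt rho l * lam 1 *
        (∏ n ∈ Finset.Icc 3 l, (1 + Dd rho n)) =
      jwt lam (Dd rho) 1 (tilde l γ) * sigmaWt rho 2 * lam (l - 1) *
        (∏ h ∈ Finset.Icc 1 (l - 2), (1 + lam h + Dd rho h)) := by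
  obtain ⟨-, -, hend, hlast⟩ := hγ
  obtain ⟨s, rfl⟩ := List.getLast?_eq_some_iff.mp hlast
  obtain ⟨n, rfl⟩ : ∃ n, l = n + 2 := ⟨l - 2, by omega⟩
  have hs : endH 1 s = n + 1 := by
    rw [endH_append] at hend
    simp only [endH] at hend
    omega
  rw [jwt_concat_true, jwt_tilde _ _ _ _ hs, hs, ← sigmaWt_mul_prod_Icc hrho hl,
    show n + 2 - 1 = n + 1 by omega, Nat.add_sub_cancel, div_eq_mul_inv,
    ← prod_Icc_one_div_div_prod_Icc_two (fun j hj => one_add_add_Dd_ne_zero hlam hrho hj)]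
  ring

/-- **Weight ratio identity for the path modification.** For `γ ∈ Γ_ℓ^{(k)}` and its
modification `γ̃ ∈ Γ_2^{(k)}` (insert `ℓ−2` down-steps before the final up-step),
`q(γ) · λ₁ · ∏_{n=3}^{ℓ} (1 + D_n) = q(γ̃) · λ_{ℓ−1} · ∏_{h=1}^{ℓ−2} (1 + λ_h + D_h)`,
where `q(γ) = p(γ) σ(ℓ)` and `q(γ̃) = p(γ̃) σ(2)`. -/
theorem weight_ratio_identity (lam rho : ℕ → ℝ)
    (hlam : ∀ i, 1 ≤ i → 0 < lam i) (hrho : ∀ i, 1 ≤ i → 0 ≤ rho i)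
    (k l : ℕ) (hk : 2 ≤ k) (hl : 2 ≤ l) (hlk : l ≤ k)
    (γ : List Bool) (hγ : γ ∈ Gamma k l) :
    jwt lam (Dd rho) 1 γ * sigmaWt rho l * lam 1 *
        (∏ n ∈ Finset.Icc 3 l, (1 + Dd rho n)) =
      jwt lam (Dd rho) 1 (tilde l γ) * sigmaWt rho 2 * lam (l - 1) *
        (∏ h ∈ Finset.Icc 1 (l - 2), (1 + lam h + Dd rho h)) :=
  weight_ratio_identity_general lam rho hlam hrho k l hl γ hγ
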